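/- arXiv:2503.19438 — 3 statements merged into one kernel-verified Lean document; each statement's English description precedes it below -/
import Mathlib

section
/- For n ≥ 2, p_s(n+μ) > p_f(n) if and only if 0 < μ < (n²+n+2)/(n+2), where p_s(z) is the positive root of (z-1)p² - (z+1)p - 2 = 0 and p_f(n) = 1 + 2/n. Consequently max{p_s(n+μ), p_f(n)} equals p_s(n+μ) for 0 < μ < (n²+n+2)/(n+2) and equals p_f(n) for μ ≥ (n²+n+2)/(n+2). -/
/-- For n ≥ 2 and μ > 0, with ps the positive root of the Strauss quadratic at z = n+μ,
ps > p_f(n) iff 0 < μ < (n²+n+2)/(n+2); consequently the max is determined accordingly. -/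
theorem strauss_vs_fujita (n : ℕ) (hn : 2 ≤ n) (μ : ℝ) (hμ : 0 < μ) (ps : ℝ)
    (hps : 0 < ps)
    (heq : (((n : ℝ) + μ) - 1) * ps ^ 2 - (((n : ℝ) + μ) + 1) * ps - 2 = 0) :
    (ps > 1 + 2 / (n : ℝ) ↔ μ < ((n : ℝ) ^ 2 + n + 2) / ((n : ℝ) + 2)) ∧
      (μ < ((n : ℝ) ^ 2 + n + 2) / ((n : ℝ) + 2) → max ps (1 + 2 / (n : ℝ)) = ps) ∧
      (μ ≥ ((n : ℝ) ^ 2 + n + 2) / ((n : ℝ) + 2) →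
        max ps (1 + 2 / (n : ℝ)) = 1 + 2 / (n : ℝ)) := by
  set A : ℝ := (n : ℝ) with hA
  have hA2 : (2 : ℝ) ≤ A := by rw [hA]; exact_mod_cast hn
  have hApos : (0 : ℝ) < A := by linarith
  set pf : ℝ := 1 + 2 / A with hpf
  have hpfpos : 0 < pf := by positivity
  -- key factor is positive
  have hfac : (A + μ - 1) * (pf + ps) - (A + μ + 1) > 0 := by
    have h1 : (A + μ - 1) * ps > A + μ + 1 := by
      nlinarith [mul_pos hps hps]
    nlinarith [mul_pos (show (0:ℝ) < A + μ - 1 by linarith) hpfpos]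
  -- Q(pf) factorization
  have hkey : (A + μ - 1) * pf ^ 2 - (A + μ + 1) * pf - 2
      = (pf - ps) * ((A + μ - 1) * (pf + ps) - (A + μ + 1)) := by
    linear_combination heq
  -- Q(pf) value
  have hQval : (A + μ - 1) * pf ^ 2 - (A + μ + 1) * pf - 2
      = 2 * ((A + 2) * μ - (A ^ 2 + A + 2)) / A ^ 2 := by
    rw [hpf]
    field_simp
    ring
  have hiff : ps > pf ↔ μ < (A ^ 2 + A + 2) / (A + 2) := by
    rw [lt_div_iff₀ (show (0:ℝ) < A + 2 by linarith)]
    constructor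
    · intro h
      have h2 : (pf - ps) * ((A + μ - 1) * (pf + ps) - (A + μ + 1)) < 0 :=
        mul_neg_of_neg_of_pos (by linarith) hfac
      rw [← hkey, hQval] at h2
      have hA2pos : (0:ℝ) < A ^ 2 := by positivity
      rw [div_neg_iff] at h2
      rcases h2 with ⟨h3, _⟩ | ⟨_, h4⟩
      · nlinarith
      · linarith
    · intro h
      have h2 : 2 * ((A + 2) * μ - (A ^ 2 + A + 2)) / A ^ 2 < 0 := by
        apply div_neg_of_neg_of_pos
        · nlinarith
        · positivity
      rw [← hQval, hkey] at h2
      by_contra hc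
      push_neg at hc
      have : 0 ≤ (pf - ps) * ((A + μ - 1) * (pf + ps) - (A + μ + 1)) :=
        mul_nonneg (by linarith) (le_of_lt hfac)
      linarith
  refine ⟨hiff, fun h => max_eq_left (le_of_lt (hiff.mpr h)), fun h => ?_⟩
  apply max_eq_right
  by_contra hc
  push_neg at hc
  have := hiff.mp hc
  linarith [h]
end

section
/- For m > 0, the system of inequalities obtained by setting α = m in the Yagdjian conditions, namely p ≤ 1 + 2m/((m+2)n+2), ((m+2)(n-2)+2)p² - (m+2)(n+2)p - 2 ≥ 0, and ((m+2)n-2)p² - (m+2)(n+2)p - (2m+2) ≥ 0, has no solution p with p > 1 for any integer n ≥ 1. -/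
/-- For m > 0 and integer n ≥ 1, the Yagdjian system with α = m has no solution p > 1. -/
theorem yagdjian_conditions_empty (m : ℝ) (hm : 0 < m) (n : ℕ) (hn : 1 ≤ n) :
    ¬ ∃ p : ℝ, 1 < p ∧
      p ≤ 1 + 2 * m / ((m + 2) * (n : ℝ) + 2) ∧
      ((m + 2) * ((n : ℝ) - 2) + 2) * p ^ 2 - (m + 2) * ((n : ℝ) + 2) * p - 2 ≥ 0 ∧
      ((m + 2) * (n : ℝ) - 2) * p ^ 2 - (m + 2) * ((n : ℝ) + 2) * p - (2 * m + 2) ≥ 0 := by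
  rintro ⟨p, hp1, hp2, -, h3⟩
  have hn1 : (1 : ℝ) ≤ (n : ℝ) := by exact_mod_cast hn
  have hN : (0 : ℝ) < (m + 2) * (n : ℝ) + 2 := by nlinarith
  have hb : (p - 1) * ((m + 2) * (n : ℝ) + 2) ≤ 2 * m := by
    have h : p - 1 ≤ 2 * m / ((m + 2) * (n : ℝ) + 2) := by linarith
    calc (p - 1) * ((m + 2) * (n : ℝ) + 2)
        ≤ (2 * m / ((m + 2) * (n : ℝ) + 2)) * ((m + 2) * (n : ℝ) + 2) :=
          mul_le_mul_of_nonneg_right h hN.le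
      _ = 2 * m := div_mul_cancel₀ _ hN.ne'
  nlinarith [mul_pos (sub_pos.mpr hp1) hm, sq_nonneg (p - 1), mul_nonneg (sub_pos.mpr hp1).le hm.le, mul_le_mul_of_nonneg_left hb (sub_pos.mpr hp1).le, mul_nonneg (mul_nonneg (sub_pos.mpr hp1).le (sub_pos.mpr hp1).le) (sub_nonneg.mpr hn1)]
end

section
/- For m > 0 and -2 < α < 0, if p ≥ p_conf(2,m,α) = (m+2α+5)/(m+1), then 1/(p(p+1)) + α/((m+2)p) < (m+1)/(m+2) - (m+4)/((m+2)(p+1)); that is, the interval of admissible weights γ in the weighted Strichartz estimate is nonempty. -/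
/-- For m > 0, -2 < α < 0, p > 1 with p ≥ (m+2α+5)/(m+1), the admissible interval
for γ is nonempty. -/
theorem gamma_interval_nonempty (m α p : ℝ) (hm : 0 < m) (hα₁ : -2 < α) (hα₂ : α < 0)
    (hp : 1 < p) (hpconf : p ≥ (m + 2 * α + 5) / (m + 1)) :
    1 / (p * (p + 1)) + α / ((m + 2) * p)
      < (m + 1) / (m + 2) - (m + 4) / ((m + 2) * (p + 1)) := by
  have hm1 : (0:ℝ) < m + 1 := by linarith
  have hkey : (m + 1) * p ≥ m + 2 * α + 5 := by
    have := (div_le_iff₀ hm1).mp hpconf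
    linarith
  have hp0 : (0:ℝ) < p := by linarith
  have hp1 : (0:ℝ) < p + 1 := by linarith
  have hm2 : (0:ℝ) < m + 2 := by linarith
  rw [div_add_div _ _ (by positivity) (by positivity), div_sub_div _ _ (by positivity) (by positivity), div_lt_div_iff₀ (by positivity) (by positivity)]
  have hcore : 0 < (m + 1) * p ^ 2 - 3 * p - α * p - α - m - 2 := by
    nlinarith [mul_nonneg (sub_nonneg.mpr hkey) hp0.le, mul_pos (show (0:ℝ) < m+α+2 by linarith) (show (0:ℝ) < p-1 by linarith)]
  nlinarith [mul_pos (mul_pos (mul_pos hm2 hm2) hp0) hcore]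
end
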